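/- arXiv:1807.05437 — 3 statements merged into one kernel-verified Lean document; each statement's English description precedes it below -/
import Mathlib

section
/- Let X be a non-atomic topological space with a topological basis {U_i : i ∈ I}, and let J ⊆ I be such that I \ J is finite. Then {U_j : j ∈ J} is also a topological basis for X. -/
open TopologicalSpace

def IsNonAtomic (X : Type*) [TopologicalSpace X] : Prop :=
  ∀ (x : X) (U : Set X), IsOpen U → x ∈ U → ∃ V : Set X, IsOpen V ∧ x ∈ V ∧ V ⊂ U

namespace TopologicalSpace.IsTopologicalBasis

variable {X : Type*} [TopologicalSpace X] {B : Set (Set X)}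

/-- If the basic set `s` was the one chosen around `x`, shrink it strictly and choose again:
the new basic set lies in a proper subset of `s`, so it is not `s`. -/
theorem sdiff_singleton (hX : IsNonAtomic X) (hB : IsTopologicalBasis B) (s : Set X) :
    IsTopologicalBasis (B \ {s}) := by
  refine isTopologicalBasis_of_isOpen_of_nhds (fun u hu ↦ hB.isOpen hu.1) ?_
  intro x W hxW hW
  obtain ⟨V, hVB, hxV, hVW⟩ := hB.exists_subset_of_mem_open hxW hW
  by_cases hVs : V = s
  · obtain ⟨V', hV'open, hxV', hV'V⟩ := hX x V (hB.isOpen hVB) hxV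
    obtain ⟨V'', hV''B, hxV'', hV''V'⟩ := hB.exists_subset_of_mem_open hxV' hV'open
    have hV''s : V'' ≠ s := by
      rintro rfl
      exact hV'V.not_subset (hVs ▸ hV''V')
    exact ⟨V'', ⟨hV''B, hV''s⟩, hxV'', hV''V'.trans (hV'V.subset.trans hVW)⟩
  · exact ⟨V, ⟨hVB, hVs⟩, hxV, hVW⟩

theorem sdiff_of_finite (hX : IsNonAtomic X) (hB : IsTopologicalBasis B) {F : Set (Set X)}
    (hF : F.Finite) : IsTopologicalBasis (B \ F) := by
  induction F, hF using Set.Finite.induction_on with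
  | empty => simpa using hB
  | @insert s F _ _ ih =>
    rw [Set.insert_eq, Set.union_comm, ← Set.sdiff_sdiff]
    exact ih.sdiff_singleton hX s

end TopologicalSpace.IsTopologicalBasis

theorem stmt_3 {X ι : Type*} [TopologicalSpace X]
    (h : ∀ (x : X) (U : Set X), IsOpen U → x ∈ U →
      ∃ V : Set X, IsOpen V ∧ x ∈ V ∧ V ⊂ U)
    (U : ι → Set X) (I J : Set ι) (hJI : J ⊆ I) (hfin : (I \ J).Finite)
    (hbasis : TopologicalSpace.IsTopologicalBasis (U '' I)) :
    TopologicalSpace.IsTopologicalBasis (U '' J) := by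
  have hrest : IsTopologicalBasis (U '' I \ U '' (I \ J)) :=
    hbasis.sdiff_of_finite h (hfin.image U)
  refine hrest.of_isOpen_of_subset (fun u hu ↦ hbasis.isOpen (Set.image_mono hJI hu)) ?_
  rintro _ ⟨⟨i, hiI, rfl⟩, hi⟩
  exact ⟨i, by_contra fun hiJ ↦ hi ⟨i, ⟨hiI, hiJ⟩, rfl⟩, rfl⟩
end

section
/- Let V_1, V_2, ... be open subsets of a topological space X. For each k, let D_k be the collection of all sets of the form B ∪ C where B is a finite union of nonempty sets of the form ∩_{i=1}^k R_i with each R_i ∈ {V_i, exterior(V_i)} and not all R_i = exterior(V_i), and C is any subset of ∪_{i=1}^k boundary(V_i). Then D_k is a ring of sets: it contains the empty set and is closed under finite unions and set differences. -/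
/-- The atom `∩_{i<k} R_i` determined by a choice function `R : Fin k → Bool`,
where `R i = true` selects `V i` and `R i = false` selects the exterior of `V i`. -/
def atomSet {X : Type*} [TopologicalSpace X] (V : ℕ → Set X) (k : ℕ)
    (R : Fin k → Bool) : Set X :=
  ⋂ i : Fin k, if R i then V i.1 else interior (V i.1)ᶜ

/-- `B_k`: finite unions of nonempty atoms whose choice function is not all-exterior. -/
def Bcal {X : Type*} [TopologicalSpace X] (V : ℕ → Set X) (k : ℕ) : Set (Set X) :=
  {B | ∃ (n : ℕ) (f : Fin n → (Fin k → Bool)),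
    (∀ j, ∃ i, f j i = true) ∧ (∀ j, (atomSet V k (f j)).Nonempty) ∧
    B = ⋃ j, atomSet V k (f j)}

/-- `D_k`: sets of the form `B ∪ C` with `B ∈ B_k` and `C` a subset of the
union of the boundaries of `V_1, …, V_k`. -/
def Dcal {X : Type*} [TopologicalSpace X] (V : ℕ → Set X) (k : ℕ) : Set (Set X) :=
  {D | ∃ B ∈ Bcal V k, ∃ C ⊆ ⋃ i : Fin k, frontier (V i.1), D = B ∪ C}

/-!
Atoms with distinct choice functions are disjoint, since at a coordinate where the choices differ
one lies in `V i` and the other in the exterior of `V i`. Hence a difference of two finite unions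
of atoms is again the union of the atoms of the first family that are missing from the second, and
`B_k` is a ring. Since the `V i` are open, every atom avoids the boundaries of `V_1, …, V_k`, so
in `(B ∪ C) \ (B' ∪ C')` the part `C'` never meets `B`, which gives
`(B \ B') ∪ (C \ (B' ∪ C'))`, again of the required form.
-/

open Set Function

theorem Set.union_sdiff_union_of_disjoint {α : Type*} {B C B' C' : Set α} (h : Disjoint B C') :
    (B ∪ C) \ (B' ∪ C') = B \ B' ∪ C \ (B' ∪ C') := by
  rw [union_sdiff_distrib, ← sdiff_sdiff, (h.mono_left sdiff_subset).sdiff_eq_left]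

section

variable {X : Type*} [TopologicalSpace X] {V : ℕ → Set X} {k : ℕ}

theorem pairwise_disjoint_atomSet : Pairwise (Disjoint on (atomSet V k)) := by
  intro R R' hne
  obtain ⟨i, hi⟩ := Function.ne_iff.1 hne
  have hdisj : Disjoint (V i) (interior (V i)ᶜ) := disjoint_compl_right.mono_right interior_subset
  refine Disjoint.mono (iInter_subset _ i) (iInter_subset _ i) ?_
  cases h : R i <;> cases h' : R' i <;>
    simp only [h, h', ne_eq, not_true_eq_false, Bool.false_eq_true, if_false, if_true] at hi ⊢
  exacts [hdisj.symm, hdisj]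

theorem disjoint_atomSet_frontier (hV : ∀ i, IsOpen (V i)) (R : Fin k → Bool) (i : Fin k) :
    Disjoint (atomSet V k R) (frontier (V i)) := by
  refine Disjoint.mono_left (iInter_subset _ i) ?_
  split_ifs
  · exact (disjoint_frontier_iff_isOpen.2 (hV i)).symm
  · simpa only [frontier_compl] using disjoint_interior_frontier (s := (V i)ᶜ)

theorem mem_Bcal_iff {B : Set X} : B ∈ Bcal V k ↔ ∃ S : Set (Fin k → Bool),
    (∀ R ∈ S, (∃ i, R i = true) ∧ (atomSet V k R).Nonempty) ∧ B = ⋃ R ∈ S, atomSet V k R := by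
  constructor
  · rintro ⟨n, f, hf, hne, rfl⟩
    exact ⟨range f, forall_mem_range.2 fun j => ⟨hf j, hne j⟩, biUnion_range.symm⟩
  · rintro ⟨S, hS, rfl⟩
    obtain ⟨n, f, -, rfl⟩ := S.toFinite.fin_param
    exact ⟨n, f, fun j => (hS _ (mem_range_self j)).1, fun j => (hS _ (mem_range_self j)).2,
      biUnion_range⟩

theorem empty_mem_Bcal : (∅ : Set X) ∈ Bcal V k :=
  mem_Bcal_iff.2 ⟨∅, by simp, by simp⟩

theorem union_mem_Bcal {B B' : Set X} (hB : B ∈ Bcal V k) (hB' : B' ∈ Bcal V k) :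
    B ∪ B' ∈ Bcal V k := by
  obtain ⟨S, hS, rfl⟩ := mem_Bcal_iff.1 hB
  obtain ⟨S', hS', rfl⟩ := mem_Bcal_iff.1 hB'
  exact mem_Bcal_iff.2 ⟨S ∪ S', fun R hR => hR.elim (hS R) (hS' R), (biUnion_union S S' _).symm⟩

theorem sdiff_mem_Bcal {B B' : Set X} (hB : B ∈ Bcal V k) (hB' : B' ∈ Bcal V k) :
    B \ B' ∈ Bcal V k := by
  obtain ⟨S, hS, rfl⟩ := mem_Bcal_iff.1 hB
  obtain ⟨S', -, rfl⟩ := mem_Bcal_iff.1 hB'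
  exact mem_Bcal_iff.2 ⟨S \ S', fun R hR => hS R hR.1,
    biUnion_sdiff_biUnion_eq (pairwise_disjoint_atomSet.set_pairwise (S ∪ S'))⟩

theorem disjoint_frontier_of_mem_Bcal (hV : ∀ i, IsOpen (V i)) {B : Set X}
    (hB : B ∈ Bcal V k) : Disjoint B (⋃ i : Fin k, frontier (V i)) := by
  obtain ⟨S, -, rfl⟩ := mem_Bcal_iff.1 hB
  simp only [disjoint_iUnion_left, disjoint_iUnion_right]
  exact fun i R _ => disjoint_atomSet_frontier hV R i

end

theorem stmt_11 {X : Type*} [TopologicalSpace X] (V : ℕ → Set X)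
    (hV : ∀ i, IsOpen (V i)) (k : ℕ) :
    MeasureTheory.IsSetRing (Dcal V k) := by
  refine ⟨⟨∅, empty_mem_Bcal, ∅, empty_subset _, (union_empty _).symm⟩, ?_, ?_⟩
  · rintro _ _ ⟨B, hB, C, hC, rfl⟩ ⟨B', hB', C', hC', rfl⟩
    exact ⟨B ∪ B', union_mem_Bcal hB hB', C ∪ C', union_subset hC hC',
      union_union_union_comm B C B' C'⟩
  · rintro _ _ ⟨B, hB, C, hC, rfl⟩ ⟨B', hB', C', hC', rfl⟩
    refine ⟨B \ B', sdiff_mem_Bcal hB hB', C \ (B' ∪ C'), sdiff_subset.trans hC, ?_⟩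
    exact union_sdiff_union_of_disjoint ((disjoint_frontier_of_mem_Bcal hV hB).mono_right hC')
end

section
/- Let X be a second-countable non-atomic locally compact Hausdorff space equipped with its Borel σ-algebra. Then there exists a finite measure μ on X that is regular, non-atomic, and strictly positive (every nonempty open set has positive measure). -/
/-!
Every nonempty open set `U` contains a compact neighbourhood `K` of one of its points. Since `X`
has no isolated points, Baire's theorem makes `K` uncountable, so the compact metrizable space `K`
is Borel isomorphic to `ℝ` and Lebesgue measure on `[0, 1]` transports to an atomless probability
measure carried by `U`. A weighted sum of such measures over a countable basis is finite, atomless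
and positive on open sets, and it is regular since `X` is locally compact and second countable.
It is non-atomic because the support of its restriction to a set of positive measure is not a
single point, and two points of the support are separated by disjoint open sets of positive
measure.
-/

open MeasureTheory Set TopologicalSpace
open scoped ENNReal NNReal

theorem perfectSpace_of_forall_exists_isOpen_ssubset {X : Type*} [TopologicalSpace X]
    (h : ∀ (x : X) (U : Set X), IsOpen U → x ∈ U →
      ∃ V : Set X, IsOpen V ∧ x ∈ V ∧ V ⊂ U) :
    PerfectSpace X := by
  refine perfectSpace_iff_forall_not_isolated.2 fun x => ⟨fun hbot => ?_⟩
  obtain ⟨V, -, hxV, hVx⟩ := h x {x} ((isOpen_singleton_iff_punctured_nhds x).2 hbot) rfl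
  exact hVx.ne ((subset_singleton_iff_eq.1 hVx.subset).resolve_left (nonempty_of_mem hxV).ne_empty)

theorem IsOpen.not_countable {X : Type*} [TopologicalSpace X] [T1Space X] [BaireSpace X]
    [PerfectSpace X] {U : Set X} (hU : IsOpen U) (hne : U.Nonempty) : ¬ U.Countable := by
  intro hc
  have hdense : Dense (⋂ x ∈ U, ({x}ᶜ : Set X)) :=
    dense_biInter_of_isOpen (fun x _ => isOpen_compl_singleton) hc
      (fun x _ => dense_compl_singleton x)
  obtain ⟨y, hyU, hy⟩ := hdense.inter_open_nonempty U hU hne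
  exact mem_iInter₂.1 hy y hyU rfl

theorem MeasurableEmbedding.nullSingletonClass_map {α β : Type*} [MeasurableSpace α]
    [MeasurableSpace β] {f : α → β} (hf : MeasurableEmbedding f) (μ : Measure α)
    [NullSingletonClass μ] : NullSingletonClass (μ.map f) :=
  ⟨fun y => by
    have hsub : (f ⁻¹' {y}).Subsingleton := fun a ha b hb => hf.injective (ha.trans hb.symm)
    rw [hf.map_apply, hsub.measure_zero]⟩

theorem StandardBorelSpace.exists_isProbabilityMeasure_nullSingletonClass {Y : Type*}
    [MeasurableSpace Y] [StandardBorelSpace Y] (hY : ¬ Countable Y) :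
    ∃ ν : Measure Y, IsProbabilityMeasure ν ∧ NullSingletonClass ν := by
  let e : ℝ ≃ᵐ Y := PolishSpace.measurableEquivOfNotCountable not_countable hY
  have : IsProbabilityMeasure (volume.restrict (Icc (0 : ℝ) 1)) := ⟨by simp⟩
  exact ⟨_, Measure.isProbabilityMeasure_map e.measurable.aemeasurable,
    e.measurableEmbedding.nullSingletonClass_map (volume.restrict (Icc (0 : ℝ) 1))⟩

theorem IsOpen.exists_isProbabilityMeasure_nullSingletonClass {X : Type*} [TopologicalSpace X]
    [SecondCountableTopology X] [LocallyCompactSpace X] [T2Space X] [PerfectSpace X]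
    [MeasurableSpace X] [BorelSpace X] {U : Set X} (hU : IsOpen U) (hne : U.Nonempty) :
    ∃ ν : Measure X, IsProbabilityMeasure ν ∧ NullSingletonClass ν ∧ ν U = 1 := by
  obtain ⟨x, hx⟩ := hne
  obtain ⟨K, hK, hxK, hKU⟩ := exists_compact_subset hU hx
  have : CompactSpace K := isCompact_iff_compactSpace.mp hK
  -- a compact metric space is Polish, so `K` becomes a standard Borel space
  let := metrizableSpaceMetric K
  have hKunc : ¬ Countable K := fun hc =>
    isOpen_interior.not_countable ⟨x, hxK⟩ ((countable_coe_iff.1 hc).mono interior_subset)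
  obtain ⟨ν, hprob, hnull⟩ :=
    StandardBorelSpace.exists_isProbabilityMeasure_nullSingletonClass hKunc
  have hval : MeasurableEmbedding (Subtype.val : K → X) :=
    MeasurableEmbedding.subtype_coe hK.measurableSet
  refine ⟨ν.map Subtype.val, Measure.isProbabilityMeasure_map hval.measurable.aemeasurable,
    hval.nullSingletonClass_map ν, ?_⟩
  rw [hval.map_apply, preimage_eq_univ_iff.2 (fun y ⟨z, hz⟩ => hz ▸ hKU z.2), measure_univ]

theorem Measure.exists_pos_isFiniteMeasure_sum_smul {X ι : Type*} [MeasurableSpace X]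
    [Countable ι] (ν : ι → Measure X) [∀ i, IsFiniteMeasure (ν i)] :
    ∃ c : ι → ℝ≥0, (∀ i, 0 < c i) ∧
      IsFiniteMeasure (Measure.sum fun i => (c i : ℝ≥0∞) • ν i) := by
  obtain ⟨c, hc, hsum⟩ := ENNReal.exists_pos_tsum_mul_lt_of_countable one_ne_zero
    (fun i => ν i univ) (fun i => measure_ne_top _ _)
  refine ⟨c, hc, ⟨?_⟩⟩
  rw [Measure.sum_apply _ MeasurableSet.univ]
  simp_rw [Measure.smul_apply, smul_eq_mul, mul_comm (c _ : ℝ≥0∞)]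
  exact hsum.trans ENNReal.one_lt_top

theorem exists_isFiniteMeasure_nullSingletonClass_isOpenPosMeasure {X : Type*}
    [TopologicalSpace X] [SecondCountableTopology X] [MeasurableSpace X]
    (h : ∀ U : Set X, IsOpen U → U.Nonempty →
      ∃ ν : Measure X, IsFiniteMeasure ν ∧ NullSingletonClass ν ∧ 0 < ν U) :
    ∃ μ : Measure X, IsFiniteMeasure μ ∧ NullSingletonClass μ ∧ μ.IsOpenPosMeasure := by
  choose ν hfin hnull hpos using fun b : countableBasis X =>
    h b (isOpen_of_mem_countableBasis b.2) (nonempty_of_mem_countableBasis b.2)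
  obtain ⟨c, hc, hμ⟩ := Measure.exists_pos_isFiniteMeasure_sum_smul ν
  refine ⟨_, hμ, ⟨fun x => ?_⟩, ⟨fun U hU hne => ?_⟩⟩
  · simp [Measure.sum_apply_of_countable]
  · obtain ⟨x, hx⟩ := hne
    obtain ⟨b, hb, -, hbU⟩ := (isBasis_countableBasis X).exists_subset_of_mem_open hx hU
    set i : countableBasis X := ⟨b, hb⟩
    refine (lt_of_lt_of_le ?_ (Measure.le_sum _ i U)).ne'
    calc (0 : ℝ≥0∞) < c i * ν i b :=
          ENNReal.mul_pos (by exact_mod_cast (hc i).ne') (hpos i).ne'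
      _ ≤ c i * ν i U := by gcongr

theorem MeasurableSet.exists_subset_measure_pos_lt {X : Type*} [TopologicalSpace X]
    [HereditarilyLindelofSpace X] [T2Space X] [MeasurableSpace X] [OpensMeasurableSpace X]
    {μ : Measure X} [NullSingletonClass μ] {A : Set X} (hA : MeasurableSet A) (hpos : 0 < μ A)
    (hfin : μ A ≠ ∞) : ∃ B : Set X, MeasurableSet B ∧ B ⊆ A ∧ 0 < μ B ∧ μ B < μ A := by
  set ρ := μ.restrict A
  have hsupp : ρ.support.Nontrivial := by
    refine not_subsingleton_iff.1 fun hs => hpos.ne' ?_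
    have h := measure_union_le (μ := ρ) ρ.support ρ.supportᶜ
    rwa [union_compl_self, hs.measure_zero, Measure.measure_compl_support, add_zero,
      nonpos_iff_eq_zero, Measure.restrict_apply_univ] at h
  obtain ⟨y, hy, z, hz, hyz⟩ := hsupp
  obtain ⟨Oy, Oz, hOy, hOz, hyOy, hzOz, hdisj⟩ := t2_separation hyz
  have hρy := (Measure.mem_support_iff_forall y).1 hy Oy (hOy.mem_nhds hyOy)
  have hρz := (Measure.mem_support_iff_forall z).1 hz Oz (hOz.mem_nhds hzOz)
  rw [Measure.restrict_apply hOy.measurableSet, inter_comm] at hρy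
  rw [Measure.restrict_apply hOz.measurableSet, inter_comm] at hρz
  refine ⟨A ∩ Oy, hA.inter hOy.measurableSet, inter_subset_left, hρy, ?_⟩
  calc μ (A ∩ Oy) < μ (A ∩ Oy) + μ (A ∩ Oz) :=
        ENNReal.lt_add_right (measure_ne_top_of_subset inter_subset_left hfin) hρz.ne'
    _ = μ ((A ∩ Oy) ∪ (A ∩ Oz)) :=
        (measure_union (hdisj.mono inter_subset_right inter_subset_right)
          (hA.inter hOz.measurableSet)).symm
    _ ≤ μ A := measure_mono (union_subset inter_subset_left inter_subset_left)

theorem stmt_18 {X : Type*} [TopologicalSpace X] [SecondCountableTopology X]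
    [LocallyCompactSpace X] [T2Space X] [MeasurableSpace X] [BorelSpace X]
    (hna : ∀ (x : X) (U : Set X), IsOpen U → x ∈ U →
      ∃ V : Set X, IsOpen V ∧ x ∈ V ∧ V ⊂ U) :
    ∃ μ : Measure X, IsFiniteMeasure μ ∧ μ.OuterRegular ∧ μ.InnerRegular ∧
      (∀ A : Set X, MeasurableSet A → 0 < μ A →
        ∃ B : Set X, MeasurableSet B ∧ B ⊆ A ∧ 0 < μ B ∧ μ B < μ A) ∧
      (∀ U : Set X, IsOpen U → U.Nonempty → 0 < μ U) := by
  have := perfectSpace_of_forall_exists_isOpen_ssubset hna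
  obtain ⟨μ, hfin, hnull, hopen⟩ :=
    exists_isFiniteMeasure_nullSingletonClass_isOpenPosMeasure fun (U : Set X) hU hne => by
      obtain ⟨ν, hprob, hnull, hνU⟩ := hU.exists_isProbabilityMeasure_nullSingletonClass hne
      exact ⟨ν, inferInstance, hnull, hνU ▸ one_pos⟩
  exact ⟨μ, hfin, inferInstance, inferInstance,
    fun A hA hpos => hA.exists_subset_measure_pos_lt hpos (measure_ne_top μ A),
    fun U hU hne => hU.measure_pos μ hne⟩
end
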